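/- Let Γ = (V, H, s, ι, ρ) be a ribbon graph with every fiber s⁻¹(v) finite, fix a cutting {φ_v} and r ≥ 1, let Γ^{ℤ} = (V, H × ℤ, s̃_ℤ, ι̃_ℤ, ρ̃_ℤ) be the ℤ-cover and Γ^{(r)} = (V, H × ℤ/rℤ, s̃, ι̃, ρ̃) the r-fold cover, let d(v) = val(v) for every v, and let ν̃_ℤ be the Nakayama map of (Γ^{ℤ}, d). Then the map H × ℤ → H × ℤ/rℤ, (h, j) ↦ (h, j mod r), induces a well-defined bijection from the set of ⟨ν̃_ℤ^{r}⟩-orbits on H × ℤ onto H × ℤ/rℤ which commutes with the structure maps: it carries the maps induced by s̃_ℤ, ι̃_ℤ, ρ̃_ℤ on the orbit set to s̃, ι̃, ρ̃ on H × ℤ/rℤ. In other words, Γ^{(r)} is isomorphic as a ribbon graph to the quotient Γ^{ℤ}/⟨ν̃^{r}⟩. -/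

import Mathlib

/-!
On the `ℤ`-cover, going once around the fibre of `v` with `ρ̃` (that is, `val v` steps) returns
to the same half-edge one sheet higher, so the Nakayama map `ν̃` is the deck shift
`(h, j) ↦ (h, j + 1)`. Hence the `⟨ν̃ʳ⟩`-orbits are exactly the fibres of reducing the sheet
mod `r`, and this reduction commutes with `s̃`, `ι̃`, and with `ρ̃`, whose formula only ever adds
`1` to the sheet.
-/

/-- A ribbon graph: vertices `V`, half-edges `H`, source map `s`,
fixed-point-free involution `ι`, and a permutation `ρ` whose orbits are
exactly the fibers `s⁻¹(v)`. -/
structure RibbonGraph (V H : Type*) where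
  s : H → V
  ι : H → H
  ρ : Equiv.Perm H
  ι_invol : ∀ h, ι (ι h) = h
  ι_ne : ∀ h, ι h ≠ h
  s_surj : Function.Surjective s
  s_ρ : ∀ h, s (ρ h) = s h
  ρ_trans : ∀ h h', s h = s h' → ∃ k : ℤ, (ρ ^ k) h = h'

/-- A cutting of a ribbon graph with finite fibers: for each vertex `v` a
bijection `φ v : Fin (n v) → s⁻¹(v)` enumerating the fiber compatibly with
`ρ`, i.e. `ρ(φ v i) = φ v (i+1)` for `i + 1 < n v`. -/
structure Cutting {V H : Type*} (Γ : RibbonGraph V H) where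
  n : V → ℕ
  φ : ∀ v, Fin (n v) → H
  φ_s : ∀ v i, Γ.s (φ v i) = v
  φ_inj : ∀ v, Function.Injective (φ v)
  φ_surj : ∀ v h, Γ.s h = v → ∃ i, φ v i = h
  φ_ρ : ∀ (v) (i : Fin (n v)) (hi : (i : ℕ) + 1 < n v),
      Γ.ρ (φ v i) = φ v ⟨(i : ℕ) + 1, hi⟩

/-- The index of a half-edge in the enumeration of its fiber. -/
noncomputable def Cutting.idx {V H : Type*} {Γ : RibbonGraph V H}
    (C : Cutting Γ) (h : H) : Fin (C.n (Γ.s h)) :=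
  (C.φ_surj (Γ.s h) h rfl).choose

/-- The permutation `ρ̃` of the cover with half-edge set `H × J`
(for `J = ℤ/rℤ` or `J = ℤ`): with `s(h) = v` and `h = φ_v(i)`,
`ρ̃(h, j) = (φ_v(i+1), j)` if `i < n_v − 1`, and
`ρ̃(h, j) = (φ_v(0), j+1)` if `i = n_v − 1`. -/
noncomputable def coverRho {V H : Type*} {Γ : RibbonGraph V H} (C : Cutting Γ)
    {J : Type*} [Add J] [One J] : H × J → H × J :=
  fun x =>
    if hlt : (C.idx x.1 : ℕ) + 1 < C.n (Γ.s x.1) then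
      (C.φ (Γ.s x.1) ⟨(C.idx x.1 : ℕ) + 1, hlt⟩, x.2)
    else
      (C.φ (Γ.s x.1) ⟨0, Nat.lt_of_le_of_lt (Nat.zero_le _) (C.idx x.1).isLt⟩, x.2 + 1)

/-- The setoid on a type whose classes are the orbits of the cyclic group
generated by a permutation. -/
def permOrbitSetoid {X : Type*} (ν : Equiv.Perm X) : Setoid X where
  r x y := ∃ k : ℤ, (ν ^ k) x = y
  iseqv := by
    constructor
    · intro x
      exact ⟨0, rfl⟩
    · rintro x y ⟨k, hk⟩
      refine ⟨-k, ?_⟩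
      rw [← hk, ← Equiv.Perm.mul_apply, ← zpow_add]
      simp
    · rintro x y z ⟨k, hk⟩ ⟨l, hl⟩
      refine ⟨l + k, ?_⟩
      rw [← hl, ← hk, ← Equiv.Perm.mul_apply, ← zpow_add]

namespace Cutting

variable {V H : Type*} {Γ : RibbonGraph V H} (C : Cutting Γ)

theorem φ_idx (h : H) : C.φ (Γ.s h) (C.idx h) = h :=
  (C.φ_surj (Γ.s h) h rfl).choose_spec

theorem φ_congr {v w : V} (hvw : v = w) {i : Fin (C.n v)} {k : Fin (C.n w)}
    (hik : (i : ℕ) = k) : C.φ v i = C.φ w k := by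
  subst hvw
  rw [Fin.ext hik]

theorem idx_φ (v : V) (i : Fin (C.n v)) : (C.idx (C.φ v i) : ℕ) = i := by
  have key : ∀ h w, Γ.s h = w → ∀ k : Fin (C.n w), C.φ w k = h → (C.idx h : ℕ) = k := by
    rintro h w rfl k hk
    rw [C.φ_inj _ ((C.φ_idx h).trans hk.symm)]
  exact key _ v (C.φ_s v i) i rfl

end Cutting

section CoverRho

variable {V H : Type*} {Γ : RibbonGraph V H} (C : Cutting Γ)

theorem coverRho_φ_of_lt {J : Type*} [Add J] [One J] (v : V) (i : Fin (C.n v))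
    (hi : (i : ℕ) + 1 < C.n v) (j : J) :
    coverRho C (C.φ v i, j) = (C.φ v ⟨i + 1, hi⟩, j) := by
  have hlt : (C.idx (C.φ v i) : ℕ) + 1 < C.n (Γ.s (C.φ v i)) := by
    rw [C.idx_φ, C.φ_s]; exact hi
  simp only [coverRho, dif_pos hlt]
  exact Prod.ext (C.φ_congr (C.φ_s v i) (by simp [C.idx_φ])) rfl

theorem coverRho_φ_of_succ_eq {J : Type*} [Add J] [One J] (v : V) (i : Fin (C.n v))
    (hi : (i : ℕ) + 1 = C.n v) (j : J) :
    coverRho C (C.φ v i, j) = (C.φ v ⟨0, by omega⟩, j + 1) := by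
  have hge : ¬ (C.idx (C.φ v i) : ℕ) + 1 < C.n (Γ.s (C.φ v i)) := by
    rw [C.idx_φ, C.φ_s]; omega
  simp only [coverRho, dif_neg hge]
  exact Prod.ext (C.φ_congr (C.φ_s v i) rfl) rfl

theorem prodMap_coverRho {J K : Type*} [Add J] [One J] [Add K] [One K] (g : J → K)
    (hg : ∀ j, g (j + 1) = g j + 1) (x : H × J) :
    Prod.map id g (coverRho C x) = coverRho C (Prod.map id g x) := by
  simp only [coverRho, Prod.map_fst, Prod.map_snd, id_eq]
  split_ifs <;> simp [hg]

/-- The half-edge of the `ℤ`-cover reached from `(φ v 0, j)` after `m` steps of `ρ̃`. -/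
def fiberWalk (v : V) (hv : 0 < C.n v) (j : ℤ) (m : ℕ) : H × ℤ :=
  (C.φ v ⟨m % C.n v, Nat.mod_lt m hv⟩, j + (m / C.n v : ℕ))

theorem coverRho_fiberWalk (v : V) (hv : 0 < C.n v) (j : ℤ) (m : ℕ) :
    coverRho C (fiberWalk C v hv j m) = fiberWalk C v hv j (m + 1) := by
  obtain ⟨q, i, hi, rfl⟩ : ∃ q i, i < C.n v ∧ m = i + C.n v * q :=
    ⟨m / C.n v, m % C.n v, Nat.mod_lt m hv, (Nat.mod_add_div m _).symm⟩
  rw [show i + C.n v * q + 1 = (i + 1) + C.n v * q by ring]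
  simp only [fiberWalk, Nat.add_mul_mod_self_left, Nat.add_mul_div_left _ _ hv,
    Nat.mod_eq_of_lt hi, Nat.div_eq_of_lt hi]
  rcases (show i + 1 ≤ C.n v from hi).lt_or_eq with hlt | heq
  · rw [coverRho_φ_of_lt C v ⟨i, hi⟩ hlt]
    simp [Nat.mod_eq_of_lt hlt, Nat.div_eq_of_lt hlt]
  · rw [coverRho_φ_of_succ_eq C v ⟨i, hi⟩ heq]
    simp only [heq, Nat.mod_self, Nat.div_self hv]
    exact Prod.ext rfl (by push_cast; ring)

theorem coverRho_iterate_fiberWalk (v : V) (hv : 0 < C.n v) (j : ℤ) (m k : ℕ) :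
    (coverRho C)^[k] (fiberWalk C v hv j m) = fiberWalk C v hv j (m + k) := by
  induction k with
  | zero => rfl
  | succ k ih => rw [Function.iterate_succ_apply', ih, coverRho_fiberWalk, add_assoc]

theorem coverRho_iterate_valency (h : H) (j : ℤ) :
    (coverRho C)^[C.n (Γ.s h)] (h, j) = (h, j + 1) := by
  have hv : 0 < C.n (Γ.s h) := Fin.pos (C.idx h)
  have hidx := (C.idx h).isLt
  have start : fiberWalk C _ hv j (C.idx h) = (h, j) := by
    simp [fiberWalk, Nat.mod_eq_of_lt hidx, Nat.div_eq_of_lt hidx, C.φ_idx]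
  have finish : fiberWalk C _ hv j (C.idx h + C.n (Γ.s h)) = (h, j + 1) := by
    simp [fiberWalk, Nat.mod_eq_of_lt hidx, Nat.add_div_right _ hv, Nat.div_eq_of_lt hidx,
      C.φ_idx]
  rw [← start, coverRho_iterate_fiberWalk, finish]

end CoverRho

section Shift

variable {X : Type*} {σ : Equiv.Perm (X × ℤ)}

theorem zpow_apply_of_shift (hσ : ∀ x, σ x = (x.1, x.2 + 1)) (k : ℤ) (x : X × ℤ) :
    (σ ^ k) x = (x.1, x.2 + k) := by
  induction k using Int.induction_on generalizing x with
  | zero => simp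
  | succ k ih =>
    rw [zpow_add_one, Equiv.Perm.mul_apply, hσ, ih]
    exact Prod.ext rfl (by push_cast; ring)
  | pred k ih =>
    have hinv : σ⁻¹ x = (x.1, x.2 - 1) := Equiv.Perm.inv_eq_iff_eq.mpr (by simp [hσ])
    rw [zpow_sub_one, Equiv.Perm.mul_apply, hinv, ih]
    exact Prod.ext rfl (by push_cast; ring)

theorem permOrbitSetoid_pow_iff_of_shift (hσ : ∀ x, σ x = (x.1, x.2 + 1)) (r : ℕ)
    (x y : X × ℤ) :
    (permOrbitSetoid (σ ^ r)).r x y ↔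
      Prod.map id (Int.cast : ℤ → ZMod r) x = Prod.map id Int.cast y := by
  have hpow : ∀ k : ℤ, ((σ ^ r) ^ k) x = (x.1, x.2 + r * k) := fun k => by
    rw [← zpow_natCast, ← zpow_mul, zpow_apply_of_shift hσ]
  change (∃ k : ℤ, ((σ ^ r) ^ k) x = y) ↔ _
  simp only [hpow, Prod.map, id, Prod.ext_iff]
  constructor
  · rintro ⟨k, h1, h2⟩
    exact ⟨h1, by rw [← h2]; push_cast; simp⟩
  · rintro ⟨h1, h2⟩
    obtain ⟨k, hk⟩ := (ZMod.intCast_eq_intCast_iff_dvd_sub _ _ _).mp h2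
    exact ⟨k, h1, by omega⟩

end Shift

theorem coverRho_zpow_valency_apply {V H : Type*} {Γ : RibbonGraph V H} (C : Cutting Γ)
    {ρZ : Equiv.Perm (H × ℤ)} (hρZ : ∀ x, ρZ x = coverRho C x) (x : H × ℤ) :
    (ρZ ^ (C.n (Γ.s x.1) : ℤ)) x = (x.1, x.2 + 1) := by
  rw [zpow_natCast, Equiv.Perm.coe_pow, funext hρZ]
  exact coverRho_iterate_valency C x.1 x.2

theorem stmt18_general {V H : Type*} (Γ : RibbonGraph V H) (C : Cutting Γ)
    (r : ℕ)
    (ρZ : Equiv.Perm (H × ℤ)) (hρZ : ∀ x, ρZ x = coverRho C x)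
    (νZ : Equiv.Perm (H × ℤ))
    (hνZ : ∀ x : H × ℤ, νZ x = (ρZ ^ (C.n (Γ.s x.1) : ℤ)) x) :
    ∃ F : Quotient (permOrbitSetoid (νZ ^ r)) → H × ZMod r,
      (∀ (h : H) (j : ℤ),
        F (Quotient.mk (permOrbitSetoid (νZ ^ r)) ((h, j) : H × ℤ)) = (h, (j : ZMod r))) ∧
      Function.Bijective F ∧
      (∀ x : H × ℤ,
        Γ.s (F (Quotient.mk (permOrbitSetoid (νZ ^ r)) x)).1 = Γ.s x.1) ∧
      (∀ x : H × ℤ,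
        F (Quotient.mk (permOrbitSetoid (νZ ^ r)) ((Γ.ι x.1, x.2) : H × ℤ))
          = (Γ.ι (F (Quotient.mk (permOrbitSetoid (νZ ^ r)) x)).1,
             (F (Quotient.mk (permOrbitSetoid (νZ ^ r)) x)).2)) ∧
      (∀ x : H × ℤ,
        F (Quotient.mk (permOrbitSetoid (νZ ^ r)) (coverRho C x))
          = coverRho C (F (Quotient.mk (permOrbitSetoid (νZ ^ r)) x))) := by
  have hνZ_shift : ∀ x : H × ℤ, νZ x = (x.1, x.2 + 1) := fun x =>
    (hνZ x).trans (coverRho_zpow_valency_apply C hρZ x)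
  have horbit := permOrbitSetoid_pow_iff_of_shift hνZ_shift r
  refine ⟨Quotient.lift (Prod.map id Int.cast) fun x y hxy => (horbit x y).mp hxy,
    fun _ _ => rfl, ⟨?_, ?_⟩, fun _ => rfl, fun _ => rfl,
    fun x => prodMap_coverRho C (Int.cast : ℤ → ZMod r) (fun j => by push_cast; rfl) x⟩
  · rintro ⟨x⟩ ⟨y⟩ hxy
    exact Quotient.sound ((horbit x y).mpr hxy)
  · exact Quotient.lift_surjective _ _
      (Function.surjective_id.prodMap ZMod.intCast_surjective)

/-- with d(v) = val(v) and ν̃_ℤ the Nakayama map of the ℤ-cover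
(Γ^{ℤ}, d), the map (h, j) ↦ (h, j mod r) induces a well-defined bijection
from the set of ⟨ν̃_ℤ^r⟩-orbits on H × ℤ onto H × ℤ/rℤ commuting with the
structure maps; i.e. Γ^{(r)} ≅ Γ^{ℤ}/⟨ν̃^r⟩ as ribbon graphs. Here ρZ is the
permutation ρ̃ of the ℤ-cover and νZ its Nakayama map. -/
theorem stmt18 {V H : Type*} (Γ : RibbonGraph V H) (C : Cutting Γ)
    (r : ℕ) (hr : 1 ≤ r)
    (ρZ : Equiv.Perm (H × ℤ)) (hρZ : ∀ x, ρZ x = coverRho C x)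
    (νZ : Equiv.Perm (H × ℤ))
    (hνZ : ∀ x : H × ℤ, νZ x = (ρZ ^ (C.n (Γ.s x.1) : ℤ)) x) :
    ∃ F : Quotient (permOrbitSetoid (νZ ^ r)) → H × ZMod r,
      (∀ (h : H) (j : ℤ),
        F (Quotient.mk (permOrbitSetoid (νZ ^ r)) ((h, j) : H × ℤ)) = (h, (j : ZMod r))) ∧
      Function.Bijective F ∧
      (∀ x : H × ℤ,
        Γ.s (F (Quotient.mk (permOrbitSetoid (νZ ^ r)) x)).1 = Γ.s x.1) ∧
      (∀ x : H × ℤ,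
        F (Quotient.mk (permOrbitSetoid (νZ ^ r)) ((Γ.ι x.1, x.2) : H × ℤ))
          = (Γ.ι (F (Quotient.mk (permOrbitSetoid (νZ ^ r)) x)).1,
             (F (Quotient.mk (permOrbitSetoid (νZ ^ r)) x)).2)) ∧
      (∀ x : H × ℤ,
        F (Quotient.mk (permOrbitSetoid (νZ ^ r)) (coverRho C x))
          = coverRho C (F (Quotient.mk (permOrbitSetoid (νZ ^ r)) x))) :=
  stmt18_general Γ C r ρZ hρZ νZ hνZ
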